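/- arXiv:2006.05534 — 2 statements merged into one kernel-verified Lean document; each statement's English description precedes it below -/
import Mathlib

section
/- Fix ε > 0, 1/2 < η < 1, and let Σ ∈ ℝ^{K×K} be positive definite and μ_0 ∈ ℝ^K. Every minimizer (μ_1, μ_2) of the problem minimize η(μ_1−μ_0)ᵀΣ^{−1}(μ_1−μ_0) + (1−η)(μ_2−μ_0)ᵀΣ^{−1}(μ_2−μ_0) subject to ‖μ_1 − μ_2‖₂ = ε satisfies μ_0 = η μ_1 + (1−η) μ_2. -/
/-!
Translating both means by the same vector keeps the constraint `‖μ1 - μ2‖ = ε`, and by the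
parallel-axis identity, translating them by their weighted mean `m` (taken relative to `μ0`)
lowers the objective by exactly `mᵀ Σ⁻¹ m`. At a minimizer this quantity is therefore `≤ 0`,
so `m = 0` because `Σ⁻¹` is positive definite.
-/

open RealInnerProductSpace

namespace LinearMap.IsSymmetric

variable {E : Type*} [NormedAddCommGroup E] [InnerProductSpace ℝ E] {T : E →ₗ[ℝ] E}

theorem weighted_inner_map_sub_mean (hT : T.IsSymmetric) {a b : ℝ} (hab : a + b = 1)
    (x y : E) {m : E} (hm : m = a • x + b • y) :
    a * ⟪x - m, T (x - m)⟫ + b * ⟪y - m, T (y - m)⟫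
      = a * ⟪x, T x⟫ + b * ⟪y, T y⟫ - ⟪m, T m⟫ := by
  have hcross : ∀ z : E, ⟪z, T m⟫ = ⟪m, T z⟫ := fun z => by rw [← hT, real_inner_comm]
  have hmean : a * ⟪m, T x⟫ + b * ⟪m, T y⟫ = ⟪m, T m⟫ := by
    subst hm
    rw [map_add, map_smul, map_smul, inner_add_right, real_inner_smul_right,
      real_inner_smul_right]
  simp only [map_sub, inner_sub_left, inner_sub_right, hcross]
  linear_combination (-2 : ℝ) * hmean + ⟪m, T m⟫ * hab

theorem weighted_mean_eq_zero_of_forall_le_translate (hT : T.IsSymmetric)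
    (hpos : ∀ v ≠ 0, 0 < ⟪v, T v⟫) {a b : ℝ} (hab : a + b = 1) {x y : E}
    (hmin : ∀ v, a * ⟪x, T x⟫ + b * ⟪y, T y⟫
      ≤ a * ⟪x - v, T (x - v)⟫ + b * ⟪y - v, T (y - v)⟫) :
    a • x + b • y = 0 := by
  by_contra hm
  have hle := hmin (a • x + b • y)
  rw [hT.weighted_inner_map_sub_mean hab x y rfl] at hle
  linarith [hpos _ hm]

end LinearMap.IsSymmetric

theorem Matrix.PosDef.inner_toEuclideanLin_pos {n : Type*} [Fintype n] [DecidableEq n]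
    {S : Matrix n n ℝ} (hS : S.PosDef) {x : EuclideanSpace ℝ n} (hx : x ≠ 0) :
    0 < ⟪x, S.toEuclideanLin x⟫ := by
  have hx' : WithLp.ofLp x ≠ 0 := by simpa using hx
  simpa [EuclideanSpace.inner_eq_star_dotProduct, dotProduct_comm] using
    hS.dotProduct_mulVec_pos hx'

theorem kl_common_cov_minimizer_general {K : ℕ} (ε η : ℝ)
    {S : Matrix (Fin K) (Fin K) ℝ} (hS : S.PosDef)
    (μ0 μ1 μ2 : EuclideanSpace ℝ (Fin K))
    (hcon : ‖μ1 - μ2‖ = ε)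
    (hmin : ∀ ν1 ν2 : EuclideanSpace ℝ (Fin K), ‖ν1 - ν2‖ = ε →
      η * inner (𝕜 := ℝ) (μ1 - μ0) (Matrix.toEuclideanLin S⁻¹ (μ1 - μ0))
        + (1 - η) * inner (𝕜 := ℝ) (μ2 - μ0) (Matrix.toEuclideanLin S⁻¹ (μ2 - μ0))
      ≤ η * inner (𝕜 := ℝ) (ν1 - μ0) (Matrix.toEuclideanLin S⁻¹ (ν1 - μ0))
        + (1 - η) * inner (𝕜 := ℝ) (ν2 - μ0) (Matrix.toEuclideanLin S⁻¹ (ν2 - μ0))) :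
    μ0 = η • μ1 + (1 - η) • μ2 := by
  have hsymm : (Matrix.toEuclideanLin S⁻¹).IsSymmetric :=
    Matrix.isSymmetric_toEuclideanLin_iff.mpr hS.inv.isHermitian
  have hmean : η • (μ1 - μ0) + (1 - η) • (μ2 - μ0) = 0 :=
    hsymm.weighted_mean_eq_zero_of_forall_le_translate
      (fun _ hv => hS.inv.inner_toEuclideanLin_pos hv) (add_sub_cancel η 1) fun v => by
        simpa only [sub_right_comm _ v μ0] using
          hmin (μ1 - v) (μ2 - v) (by rwa [sub_sub_sub_cancel_right])
  rw [eq_comm, ← sub_eq_zero, ← hmean]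
  module

/-- Every minimizer of the weighted Mahalanobis objective subject to ‖μ1−μ2‖ = ε
satisfies μ0 = η μ1 + (1−η) μ2. -/
theorem kl_common_cov_minimizer {K : ℕ} (ε η : ℝ) (hε : 0 < ε)
    (hη : 1/2 < η) (hη1 : η < 1)
    {S : Matrix (Fin K) (Fin K) ℝ} (hS : S.PosDef)
    (μ0 μ1 μ2 : EuclideanSpace ℝ (Fin K))
    (hcon : ‖μ1 - μ2‖ = ε)
    (hmin : ∀ ν1 ν2 : EuclideanSpace ℝ (Fin K), ‖ν1 - ν2‖ = ε →
      η * inner (𝕜 := ℝ) (μ1 - μ0) (Matrix.toEuclideanLin S⁻¹ (μ1 - μ0))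
        + (1 - η) * inner (𝕜 := ℝ) (μ2 - μ0) (Matrix.toEuclideanLin S⁻¹ (μ2 - μ0))
      ≤ η * inner (𝕜 := ℝ) (ν1 - μ0) (Matrix.toEuclideanLin S⁻¹ (ν1 - μ0))
        + (1 - η) * inner (𝕜 := ℝ) (ν2 - μ0) (Matrix.toEuclideanLin S⁻¹ (ν2 - μ0))) :
    μ0 = η • μ1 + (1 - η) • μ2 :=
  kl_common_cov_minimizer_general ε η hS μ0 μ1 μ2 hcon hmin
end

section
/- Fix K > κ ≥ 1, ε > 0 and η with (K−κ+ε²)/(K−κ+2ε²) < η < 1, and set u* = ((K−κ)(1−η)/(ε²(2η−1)))^{1/3}. Define f(u) = (K−κ)((1−η)|u−1|/|u| + η)² + ε²(η|u| + (1−η)|u−1|)² for u ≠ 0. Then f attains its global minimum over ℝ \ {0} at u = u*, and f(u*) = (((K−κ)(1−η)(2η−1)²/ε²)^{1/3} + (1−η))² ((K−κ)^{1/3}(ε²(2η−1)/(1−η))^{2/3} + ε²). -/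
/-!
Write `a = K - κ`, `b = 1 - η`, `c = 2η - 1`, so `b, c > 0`. Since `|u - 1| ≥ 1 - |u|` and
`η - b = c`, the objective at `u` dominates `g(|u|)` where `g t = (c t + b)² (a + ε² t²) / t²`,
with equality on `(0, 1]`. If `θ³ = a b / (ε² c)`, then `g t - g θ` is `ε² c (t - θ)²` times a
polynomial with nonnegative coefficients over `t² θ²`, so `θ` minimises `g` on `(0, ∞)`; the lower
bound on `η` is exactly `θ < 1`, hence `θ` also minimises the objective.
-/

open Real

noncomputable def objective (a ε η u : ℝ) : ℝ :=
  a * ((1 - η) * |u - 1| / |u| + η) ^ 2 + ε ^ 2 * (η * |u| + (1 - η) * |u - 1|) ^ 2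

noncomputable def reducedObjective (a ε η t : ℝ) : ℝ :=
  ((2 * η - 1) * t + (1 - η)) ^ 2 * (a + ε ^ 2 * t ^ 2) / t ^ 2

lemma rpow_one_div_three_eq {x y : ℝ} (hx : 0 ≤ x) (h : x ^ 3 = y) : y ^ ((1 : ℝ) / 3) = x := by
  rw [← h, ← rpow_natCast x 3, ← rpow_mul hx]
  norm_num

lemma rpow_one_div_three_pow_three {x : ℝ} (hx : 0 ≤ x) : (x ^ ((1 : ℝ) / 3)) ^ 3 = x := by
  rw [← rpow_natCast, ← rpow_mul hx]
  norm_num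

section

variable {a ε η : ℝ}

lemma objective_eq_mul {u : ℝ} (hu : u ≠ 0) :
    objective a ε η u = ((1 - η) * |u - 1| / |u| + η) ^ 2 * (a + ε ^ 2 * |u| ^ 2) := by
  have : |u| ≠ 0 := abs_ne_zero.mpr hu
  unfold objective
  field_simp
  ring

lemma objective_eq_reducedObjective {u : ℝ} (hu0 : 0 < u) (hu1 : u ≤ 1) :
    objective a ε η u = reducedObjective a ε η u := by
  rw [objective_eq_mul hu0.ne', abs_of_pos hu0, abs_of_nonpos (by linarith), reducedObjective]
  field_simp
  ring

lemma reducedObjective_le_objective (ha : 0 ≤ a) (hη : 1 / 2 ≤ η) (hη1 : η ≤ 1) {u : ℝ}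
    (hu : u ≠ 0) : reducedObjective a ε η |u| ≤ objective a ε η u := by
  have hu' : 0 < |u| := abs_pos.mpr hu
  have hdist : 1 - |u| ≤ |u - 1| := by
    simpa [abs_sub_comm] using abs_sub_abs_le_abs_sub (1 : ℝ) u
  have hcoef : ((2 * η - 1) * |u| + (1 - η)) / |u| ≤ (1 - η) * |u - 1| / |u| + η := by
    rw [div_le_iff₀ hu', add_mul, div_mul_cancel₀ _ hu'.ne']
    nlinarith
  have hcoef_nonneg : 0 ≤ ((2 * η - 1) * |u| + (1 - η)) / |u| := by
    have : 0 ≤ 2 * η - 1 := by linarith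
    positivity
  calc reducedObjective a ε η |u|
      = (((2 * η - 1) * |u| + (1 - η)) / |u|) ^ 2 * (a + ε ^ 2 * |u| ^ 2) := by
        rw [reducedObjective, div_pow]; ring
    _ ≤ ((1 - η) * |u - 1| / |u| + η) ^ 2 * (a + ε ^ 2 * |u| ^ 2) := by gcongr
    _ = objective a ε η u := (objective_eq_mul hu).symm

lemma reducedObjective_le_of_cube_eq (hη : 1 / 2 ≤ η) (hη1 : η ≤ 1) {θ t : ℝ} (hθ : 0 < θ)
    (hcube : a * (1 - η) = ε ^ 2 * (2 * η - 1) * θ ^ 3) (ht : 0 < t) :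
    reducedObjective a ε η θ ≤ reducedObjective a ε η t := by
  set b := 1 - η
  set c := 2 * η - 1
  have hb : 0 ≤ b := by linarith
  have hc : 0 ≤ c := by linarith
  have hfactor : (c * t + b) ^ 2 * (a + ε ^ 2 * t ^ 2) * θ ^ 2
      - (c * θ + b) ^ 2 * (a + ε ^ 2 * θ ^ 2) * t ^ 2
      = ε ^ 2 * c * θ ^ 2 * (t - θ) ^ 2 * (c * t ^ 2 + 2 * (b + c * θ) * t + b * θ) := by
    linear_combination ((θ - t) * (2 * c * t * θ + b * θ + b * t)) * hcube
  have hnonneg : 0 ≤ ε ^ 2 * c * θ ^ 2 * (t - θ) ^ 2 * (c * t ^ 2 + 2 * (b + c * θ) * t + b * θ) := by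
    positivity
  rw [reducedObjective, reducedObjective, div_le_div_iff₀ (by positivity) (by positivity)]
  linarith

lemma reducedObjective_eq_of_cube_eq (ha : 0 ≤ a) (hε : 0 < ε) (hη : 1 / 2 < η) (hη1 : η < 1)
    {θ : ℝ} (hθ : 0 < θ) (hcube : a * (1 - η) = ε ^ 2 * (2 * η - 1) * θ ^ 3) :
    reducedObjective a ε η θ
      = ((a * (1 - η) * (2 * η - 1) ^ 2 / ε ^ 2) ^ ((1 : ℝ) / 3) + (1 - η)) ^ 2
        * (a ^ ((1 : ℝ) / 3) * (ε ^ 2 * (2 * η - 1) / (1 - η)) ^ ((2 : ℝ) / 3) + ε ^ 2) := by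
  unfold reducedObjective
  set b := 1 - η
  set c := 2 * η - 1
  have hb : 0 < b := by linarith
  have hc : 0 < c := by linarith
  have hlinear : (a * b * c ^ 2 / ε ^ 2) ^ ((1 : ℝ) / 3) = c * θ :=
    rpow_one_div_three_eq (by positivity) (by rw [hcube]; field_simp)
  have hquadratic_cube : (a / θ ^ 2) ^ 3 = a * (ε ^ 2 * c / b) ^ 2 := by
    field_simp
    linear_combination a * (a * b + ε ^ 2 * c * θ ^ 3) * hcube
  have hquadratic : a ^ ((1 : ℝ) / 3) * (ε ^ 2 * c / b) ^ ((2 : ℝ) / 3) = a / θ ^ 2 := by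
    rw [show (2 : ℝ) / 3 = 2 * (1 / 3) by norm_num, rpow_mul (by positivity), rpow_two,
      ← mul_rpow ha (by positivity)]
    exact rpow_one_div_three_eq (by positivity) hquadratic_cube
  rw [hlinear, hquadratic]
  field_simp

end

theorem f_global_min_general (K κ : ℕ) (hK : κ < K)
    (ε η : ℝ) (hε : 0 < ε)
    (hηlow : ((K:ℝ) - κ + ε^2) / ((K:ℝ) - κ + 2*ε^2) < η) (hη1 : η < 1) :
    (∀ u : ℝ, u ≠ 0 →
      ((K:ℝ) - κ) * ((1 - η) * |(((K:ℝ) - κ) * (1 - η) / (ε^2 * (2*η - 1))) ^ ((1:ℝ)/3) - 1|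
            / |(((K:ℝ) - κ) * (1 - η) / (ε^2 * (2*η - 1))) ^ ((1:ℝ)/3)| + η)^2
        + ε^2 * (η * |(((K:ℝ) - κ) * (1 - η) / (ε^2 * (2*η - 1))) ^ ((1:ℝ)/3)|
            + (1 - η) * |(((K:ℝ) - κ) * (1 - η) / (ε^2 * (2*η - 1))) ^ ((1:ℝ)/3) - 1|)^2
      ≤ ((K:ℝ) - κ) * ((1 - η) * |u - 1| / |u| + η)^2
        + ε^2 * (η * |u| + (1 - η) * |u - 1|)^2) ∧
    ((K:ℝ) - κ) * ((1 - η) * |(((K:ℝ) - κ) * (1 - η) / (ε^2 * (2*η - 1))) ^ ((1:ℝ)/3) - 1|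
          / |(((K:ℝ) - κ) * (1 - η) / (ε^2 * (2*η - 1))) ^ ((1:ℝ)/3)| + η)^2
      + ε^2 * (η * |(((K:ℝ) - κ) * (1 - η) / (ε^2 * (2*η - 1))) ^ ((1:ℝ)/3)|
          + (1 - η) * |(((K:ℝ) - κ) * (1 - η) / (ε^2 * (2*η - 1))) ^ ((1:ℝ)/3) - 1|)^2
    = (((((K:ℝ) - κ) * (1 - η) * (2*η - 1)^2 / ε^2) ^ ((1:ℝ)/3)) + (1 - η))^2
        * (((K:ℝ) - κ) ^ ((1:ℝ)/3) * (ε^2 * (2*η - 1) / (1 - η)) ^ ((2:ℝ)/3) + ε^2) := by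
  set a : ℝ := (K:ℝ) - κ
  have ha : 0 < a := sub_pos.mpr (by exact_mod_cast hK)
  have hlow : a + ε ^ 2 < η * (a + 2 * ε ^ 2) := (div_lt_iff₀ (by positivity)).mp hηlow
  have hη : 1 / 2 < η := by nlinarith
  have hc : 0 < 2 * η - 1 := by linarith
  have hratio : 0 < a * (1 - η) / (ε ^ 2 * (2 * η - 1)) := by
    have : 0 < 1 - η := by linarith
    positivity
  set θ := (a * (1 - η) / (ε ^ 2 * (2 * η - 1))) ^ ((1 : ℝ) / 3)
  have hθ : 0 < θ := rpow_pos_of_pos hratio _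
  have hθ1 : θ ≤ 1 := rpow_le_one hratio.le
    ((div_le_one (by nlinarith)).mpr (by nlinarith)) (by norm_num)
  have hcube : a * (1 - η) = ε ^ 2 * (2 * η - 1) * θ ^ 3 := by
    rw [rpow_one_div_three_pow_three hratio.le, mul_div_cancel₀ _ (by positivity)]
  have hθ_eq : objective a ε η θ = reducedObjective a ε η θ :=
    objective_eq_reducedObjective hθ hθ1
  refine ⟨fun u hu => ?_, ?_⟩
  · change objective a ε η θ ≤ objective a ε η u
    calc objective a ε η θ = reducedObjective a ε η θ := hθ_eq
      _ ≤ reducedObjective a ε η |u| :=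
        reducedObjective_le_of_cube_eq hη.le hη1.le hθ hcube (abs_pos.mpr hu)
      _ ≤ objective a ε η u := reducedObjective_le_objective ha.le hη.le hη1.le hu
  · change objective a ε η θ = _
    rw [hθ_eq, reducedObjective_eq_of_cube_eq ha.le hε hη hη1 hθ hcube]

/-- The function f attains its global minimum over ℝ \ {0} at u*, with the stated value. -/
theorem f_global_min (K κ : ℕ) (hκ : 1 ≤ κ) (hK : κ < K)
    (ε η : ℝ) (hε : 0 < ε)
    (hηlow : ((K:ℝ) - κ + ε^2) / ((K:ℝ) - κ + 2*ε^2) < η) (hη1 : η < 1) :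
    (∀ u : ℝ, u ≠ 0 →
      ((K:ℝ) - κ) * ((1 - η) * |(((K:ℝ) - κ) * (1 - η) / (ε^2 * (2*η - 1))) ^ ((1:ℝ)/3) - 1|
            / |(((K:ℝ) - κ) * (1 - η) / (ε^2 * (2*η - 1))) ^ ((1:ℝ)/3)| + η)^2
        + ε^2 * (η * |(((K:ℝ) - κ) * (1 - η) / (ε^2 * (2*η - 1))) ^ ((1:ℝ)/3)|
            + (1 - η) * |(((K:ℝ) - κ) * (1 - η) / (ε^2 * (2*η - 1))) ^ ((1:ℝ)/3) - 1|)^2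
      ≤ ((K:ℝ) - κ) * ((1 - η) * |u - 1| / |u| + η)^2
        + ε^2 * (η * |u| + (1 - η) * |u - 1|)^2) ∧
    ((K:ℝ) - κ) * ((1 - η) * |(((K:ℝ) - κ) * (1 - η) / (ε^2 * (2*η - 1))) ^ ((1:ℝ)/3) - 1|
          / |(((K:ℝ) - κ) * (1 - η) / (ε^2 * (2*η - 1))) ^ ((1:ℝ)/3)| + η)^2
      + ε^2 * (η * |(((K:ℝ) - κ) * (1 - η) / (ε^2 * (2*η - 1))) ^ ((1:ℝ)/3)|
          + (1 - η) * |(((K:ℝ) - κ) * (1 - η) / (ε^2 * (2*η - 1))) ^ ((1:ℝ)/3) - 1|)^2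
    = (((((K:ℝ) - κ) * (1 - η) * (2*η - 1)^2 / ε^2) ^ ((1:ℝ)/3)) + (1 - η))^2
        * (((K:ℝ) - κ) ^ ((1:ℝ)/3) * (ε^2 * (2*η - 1) / (1 - η)) ^ ((2:ℝ)/3) + ε^2) :=
  f_global_min_general K κ hK ε η hε hηlow hη1
end
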